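/- arXiv:1809.03885 — 2 statements merged into one kernel-verified Lean document; each statement's English description precedes it below -/
import Mathlib

section
/- The ex-ante value of the insider's information in the one-period Kyle equilibrium equals σσ_ν/2: let V and ν be independent real Gaussian random variables with V ~ N(0, σ²) and ν ~ N(0, σ_ν²), where σ > 0 and σ_ν > 0, and set β = σ_ν/σ and λ = σ/(2σ_ν). Then the expected equilibrium profit of the insider satisfies E[βV·(V − λ(βV + ν))] = σσ_ν/2. -/
/-!
For any linear strategy `θ = βV` and linear pricing rule `λ(θ + ν)`, independence of the noise
trade `ν` from `V` and `E[ν] = 0` kill the cross term, so the expected profit is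
`β (1 - λβ) E[V²] = β (1 - λβ) σ²`. At the equilibrium coefficients `λβ = 1/2` and
`βσ² = σσ_ν`, so the profit is `σσ_ν/2`.
-/

open MeasureTheory ProbabilityTheory

section

variable {Ω : Type*} {mΩ : MeasurableSpace Ω} {μ : Measure Ω}

lemma integral_sq_eq_of_hasLaw_gaussianReal {X : Ω → ℝ} {v : NNReal}
    (hX : HasLaw X (gaussianReal 0 v) μ) : ∫ ω, X ω ^ 2 ∂μ = v := by
  have hX0 : μ[X] = 0 := hX.integral_eq.trans integral_id_gaussianReal
  rw [← variance_of_integral_eq_zero hX.aemeasurable hX0, hX.variance_eq,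
    variance_id_gaussianReal]

lemma integral_mul_sub_mul_add_eq_of_indepFun [IsFiniteMeasure μ] {V ν : Ω → ℝ}
    (hV : MemLp V 2 μ) (hν : Integrable ν μ) (hVν : V ⟂ᵢ[μ] ν) (hν0 : μ[ν] = 0) (β lam : ℝ) :
    ∫ ω, β * V ω * (V ω - lam * (β * V ω + ν ω)) ∂μ = β * (1 - lam * β) * ∫ ω, V ω ^ 2 ∂μ := by
  have hcross : ∫ ω, V ω * ν ω ∂μ = 0 := by
    rw [hVν.integral_fun_mul_eq_mul_integral hV.aestronglyMeasurable hν.aestronglyMeasurable,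
      hν0, mul_zero]
  have hVν_int : Integrable (fun ω ↦ V ω * ν ω) μ :=
    hVν.integrable_mul (hV.integrable one_le_two) hν
  calc ∫ ω, β * V ω * (V ω - lam * (β * V ω + ν ω)) ∂μ
      = ∫ ω, β * (1 - lam * β) * V ω ^ 2 + -(lam * β) * (V ω * ν ω) ∂μ := by
        congr 1 with ω; ring
    _ = β * (1 - lam * β) * ∫ ω, V ω ^ 2 ∂μ := by
        rw [integral_add (hV.integrable_sq.const_mul _) (hVν_int.const_mul _), integral_const_mul,
          integral_const_mul, hcross, mul_zero, add_zero]

end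

lemma kyle_equilibrium_profit_coeff {σ σν β lam : ℝ} (hβ : β = σν / σ)
    (hlam : lam = σ / (2 * σν)) : β * (1 - lam * β) * σ ^ 2 = σ * σν / 2 := by
  subst hβ hlam
  -- with `x / 0 = 0`, both degenerate cases read `0 = 0`
  rcases eq_or_ne σ 0 with rfl | hσ
  · simp
  rcases eq_or_ne σν 0 with rfl | hσν
  · simp
  field_simp
  ring

theorem kyle_one_period_value_of_information_general
    {Ω : Type*} {mΩ : MeasurableSpace Ω} {μ : Measure Ω} [IsProbabilityMeasure μ]
    (σ σν : ℝ)
    (V ν : Ω → ℝ) (hV : Measurable V) (hν : Measurable ν)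
    (hVlaw : μ.map V = gaussianReal 0 (Real.toNNReal (σ ^ 2)))
    (hνlaw : μ.map ν = gaussianReal 0 (Real.toNNReal (σν ^ 2)))
    (hindep : IndepFun V ν μ)
    (β lam : ℝ) (hβ : β = σν / σ) (hlam : lam = σ / (2 * σν)) :
    ∫ ω, β * V ω * (V ω - lam * (β * V ω + ν ω)) ∂μ = σ * σν / 2 := by
  have hVgauss : HasLaw V (gaussianReal 0 (σ ^ 2).toNNReal) μ := ⟨hV.aemeasurable, hVlaw⟩
  have hνgauss : HasLaw ν (gaussianReal 0 (σν ^ 2).toNNReal) μ := ⟨hν.aemeasurable, hνlaw⟩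
  have hν0 : μ[ν] = 0 := hνgauss.integral_eq.trans integral_id_gaussianReal
  rw [integral_mul_sub_mul_add_eq_of_indepFun hVgauss.hasGaussianLaw.memLp_two
    hνgauss.hasGaussianLaw.integrable hindep hν0, integral_sq_eq_of_hasLaw_gaussianReal hVgauss,
    Real.coe_toNNReal _ (sq_nonneg σ)]
  exact kyle_equilibrium_profit_coeff hβ hlam

/-- **Ex-ante value of the insider's information in the one-period Kyle equilibrium.**
Let `V` and `ν` be independent real Gaussian random variables with `V ~ N(0, σ²)` and
`ν ~ N(0, σν²)`, where `σ > 0` and `σν > 0`, and set `β = σν/σ`, `λ = σ/(2σν)`.  Then the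
expected equilibrium profit of the insider satisfies
`E[β V (V − λ(β V + ν))] = σ σν / 2`. -/
theorem kyle_one_period_value_of_information
    {Ω : Type*} {mΩ : MeasurableSpace Ω} {μ : Measure Ω} [IsProbabilityMeasure μ]
    (σ σν : ℝ) (hσ : 0 < σ) (hσν : 0 < σν)
    (V ν : Ω → ℝ) (hV : Measurable V) (hν : Measurable ν)
    (hVlaw : μ.map V = gaussianReal 0 (Real.toNNReal (σ ^ 2)))
    (hνlaw : μ.map ν = gaussianReal 0 (Real.toNNReal (σν ^ 2)))
    (hindep : IndepFun V ν μ)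
    (β lam : ℝ) (hβ : β = σν / σ) (hlam : lam = σ / (2 * σν)) :
    ∫ ω, β * V ω * (V ω - lam * (β * V ω + ν ω)) ∂μ = σ * σν / 2 :=
  kyle_one_period_value_of_information_general (mΩ := mΩ) σ σν V ν hV hν hVlaw hνlaw hindep β lam hβ
    hlam
end

section
/- The auxiliary value function Ψ^a solves the backward heat equation: let H ∈ C^{1,2}([0,1) × ℝ) satisfy H_t + ½H_{yy} = 0 on [0,1) × ℝ, suppose that for each t ∈ [0,1) the map y ↦ H(t,y) is strictly increasing with range ℝ, let a ∈ ℝ, let ξ(t,a) be the unique solution of H(t, ξ(t,a)) = a, and assume s ↦ H_y(s, ξ(s,a)) is integrable on [t,1] for each t ∈ [0,1). Define Ψ^a(t,x) = ∫_{ξ(t,a)}^x (H(t,u) − a) du + ½∫_t^1 H_y(s, ξ(s,a)) ds. Then on [0,1) × ℝ: (i) Ψ^a_x(t,x) = H(t,x) − a; (ii) Ψ^a_{xx}(t,x) = H_x(t,x); and (iii) Ψ^a_t(t,x) + ½Ψ^a_{xx}(t,x) = 0. -/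
/-!
Fix `t` and `x` and split `∫_{ξ τ}^x = ∫_{ξ t}^x - ∫_{ξ t}^{ξ τ}`. The first piece is
differentiated in `τ` under the integral sign (through Fubini and the fundamental theorem of
calculus, which also covers the endpoint `τ = 0`), and the heat equation turns its derivative
`∫_{ξ t}^x H_t` into `-½ (H_y(t,x) - H_y(t,ξ t))`. The second piece is `o(τ - t)`: `H(τ,·) - a` is
monotone and vanishes at `ξ τ`, so the piece is at most `|H(τ,ξ t) - a| · |ξ τ - ξ t|`, an
`O(τ - t)` factor times one tending to `0` by continuity of the root `ξ`. The time integral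
contributes `-½ H_y(t,ξ t)`, which cancels the boundary term.
-/

open Set MeasureTheory Filter Topology Asymptotics

theorem continuousOn_parametric_intervalIntegral {X E : Type*} [TopologicalSpace X]
    [NormedAddCommGroup E] [NormedSpace ℝ E] {F : X → ℝ → E} {s : Set X}
    (hF : ContinuousOn (fun p : X × ℝ => F p.1 p.2) (s ×ˢ univ)) (c d : ℝ) :
    ContinuousOn (fun x => ∫ u in c..d, F x u) s := by
  rw [continuousOn_iff_continuous_domRestrict]
  exact intervalIntegral.continuous_parametric_intervalIntegral_of_continuous'
    (f := fun (x : s) u => F x u)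
    (hF.comp_continuous (continuous_subtype_val.prodMap continuous_id)
      fun p => ⟨p.1.2, trivial⟩) c d

theorem hasDerivWithinAt_primitive_Ico {g : ℝ → ℝ} {a b t : ℝ} (hg : ContinuousOn g (Ico a b))
    (ht : t ∈ Ico a b) :
    HasDerivWithinAt (fun τ => ∫ s in t..τ, g s) (g t) (Ico a b) t := by
  have hmeas := hg.aestronglyMeasurable (μ := volume) measurableSet_Ico
  rcases ht.1.eq_or_lt with rfl | hat
  · have hmem : Ico a b ∈ 𝓝[>] a := nhdsWithin_mono _ Ioi_subset_Ici_self (Ico_mem_nhdsGE ht.2)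
    exact (intervalIntegral.integral_hasDerivWithinAt_right (t := Ioi a) IntervalIntegrable.refl
      ⟨_, hmem, hmeas⟩ ((hg a ht).mono_of_mem_nhdsWithin hmem)).mono Ico_subset_Ici_self
  · have hmem : Ico a b ∈ 𝓝 t := Ico_mem_nhds hat ht.2
    exact (intervalIntegral.integral_hasDerivAt_right IntervalIntegrable.refl
      ⟨_, hmem, hmeas⟩ ((hg t ht).continuousAt hmem)).hasDerivWithinAt

theorem integral_eq_sub_of_hasDerivWithinAt_Ico {f f' : ℝ → ℝ} {a b t τ : ℝ}
    (hf : ∀ s ∈ Ico a b, HasDerivWithinAt f (f' s) (Ico a b) s) (hf' : ContinuousOn f' (Ico a b))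
    (ht : t ∈ Ico a b) (hτ : τ ∈ Ico a b) :
    ∫ s in t..τ, f' s = f τ - f t := by
  have hsub : uIcc t τ ⊆ Ico a b := ordConnected_Ico.uIcc_subset ht hτ
  refine intervalIntegral.integral_eq_sub_of_hasDeriv_right
    (fun s hs => (hf s (hsub hs)).continuousWithinAt.mono hsub) (fun s hs => ?_)
    (hf'.mono hsub).intervalIntegrable
  have hs' : s ∈ Ioo a b :=
    ⟨(le_min ht.1 hτ.1).trans_lt hs.1, hs.2.trans (max_lt ht.2 hτ.2)⟩
  exact ((hf s (Ioo_subset_Ico_self hs')).hasDerivAt (Ico_mem_nhds hs'.1 hs'.2)).hasDerivWithinAt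

theorem hasDerivWithinAt_parametric_intervalIntegral_Ico {F F' : ℝ → ℝ → ℝ} {a b c d t : ℝ}
    (hF : ∀ τ ∈ Ico a b, ∀ u, HasDerivWithinAt (fun σ => F σ u) (F' τ u) (Ico a b) τ)
    (hFc : ContinuousOn (fun p : ℝ × ℝ => F p.1 p.2) (Ico a b ×ˢ univ))
    (hF'c : ContinuousOn (fun p : ℝ × ℝ => F' p.1 p.2) (Ico a b ×ˢ univ))
    (ht : t ∈ Ico a b) :
    HasDerivWithinAt (fun τ => ∫ u in c..d, F τ u) (∫ u in c..d, F' t u) (Ico a b) t := by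
  have hslice : ∀ τ ∈ Ico a b, IntervalIntegrable (F τ) volume c d := fun τ hτ =>
    (continuousOn_univ.mp (hFc.uncurry_left τ hτ)).intervalIntegrable _ _
  have hincr : ∀ τ ∈ Ico a b,
      ∫ u in c..d, F τ u = (∫ u in c..d, F t u) + ∫ s in t..τ, ∫ u in c..d, F' s u := by
    intro τ hτ
    have hfubini : IntegrableOn (fun p : ℝ × ℝ => F' p.1 p.2) (uIoc t τ ×ˢ uIoc c d) :=
      (ContinuousOn.integrableOn_compact (isCompact_uIcc.prod isCompact_uIcc)
        (hF'c.mono (prod_mono (ordConnected_Ico.uIcc_subset ht hτ) (subset_univ _)))).mono_set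
        (prod_mono uIoc_subset_uIcc uIoc_subset_uIcc)
    have hftc : ∀ u, ∫ s in t..τ, F' s u = F τ u - F t u := fun u =>
      integral_eq_sub_of_hasDerivWithinAt_Ico (fun s hs => hF s hs u)
        (hF'c.uncurry_right u (mem_univ u)) ht hτ
    rw [intervalIntegral_intervalIntegral_swap hfubini, intervalIntegral.integral_congr
      (fun u _ => hftc u), intervalIntegral.integral_sub (hslice τ hτ) (hslice t ht)]
    ring
  refine HasDerivWithinAt.congr ?_ hincr (hincr t ht)
  exact (hasDerivWithinAt_primitive_Ico
    (continuousOn_parametric_intervalIntegral hF'c c d) ht).const_add _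

theorem norm_intervalIntegral_le_of_monotone_of_eq_zero {f : ℝ → ℝ} (hf : Monotone f) {y z : ℝ}
    (hz : f z = 0) : ‖∫ u in y..z, f u‖ ≤ ‖f y‖ * |z - y| := by
  refine intervalIntegral.norm_integral_le_of_norm_le_const fun u hu => ?_
  simp only [Real.norm_eq_abs]
  rcases mem_uIoc.mp hu with ⟨hyu, huz⟩ | ⟨hzu, huy⟩
  · have := hf hyu.le; have := hf huz
    rw [abs_of_nonpos (by linarith), abs_of_nonpos (by linarith)]; linarith
  · have := hf hzu.le; have := hf huy
    rw [abs_of_nonneg (by linarith), abs_of_nonneg (by linarith)]; linarith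

theorem hasDerivWithinAt_integral_to_root {F : ℝ → ℝ → ℝ} {ξ : ℝ → ℝ} {s : Set ℝ} {t d : ℝ}
    (hmono : ∀ τ ∈ s, Monotone (F τ)) (hroot : ∀ τ ∈ s, F τ (ξ τ) = 0)
    (hξ : ContinuousWithinAt ξ s t) (hF : HasDerivWithinAt (fun τ => F τ (ξ t)) d s t)
    (ht : t ∈ s) :
    HasDerivWithinAt (fun τ => ∫ u in ξ t..ξ τ, F τ u) 0 s t := by
  rw [hasDerivWithinAt_iff_isLittleO]
  simp only [intervalIntegral.integral_same, sub_zero, smul_zero]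
  have hFlin : (fun τ => F τ (ξ t)) =O[𝓝[s] t] (fun τ => τ - t) := by
    simpa [hroot t ht] using hF.hasFDerivWithinAt.isBigO_sub
  have hξlim : (fun τ => ξ τ - ξ t) =o[𝓝[s] t] (fun _ => (1 : ℝ)) :=
    (isLittleO_one_iff ℝ).mpr (by simpa using hξ.sub_const (ξ t))
  have hbound : (fun τ => ∫ u in ξ t..ξ τ, F τ u) =O[𝓝[s] t]
      (fun τ => F τ (ξ t) * (ξ τ - ξ t)) := by
    refine IsBigO.of_bound 1 (eventually_nhdsWithin_of_forall fun τ hτ => ?_)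
    rw [one_mul, norm_mul, Real.norm_eq_abs (ξ τ - ξ t)]
    exact norm_intervalIntegral_le_of_monotone_of_eq_zero (hmono τ hτ) (hroot τ hτ)
  simpa using hbound.trans_isLittleO (hFlin.mul_isLittleO hξlim)

theorem continuousWithinAt_root_of_strictMono {F : ℝ → ℝ → ℝ} {ξ : ℝ → ℝ} {s : Set ℝ} {t a : ℝ}
    (hmono : ∀ τ ∈ s, StrictMono (F τ)) (hroot : ∀ τ ∈ s, F τ (ξ τ) = a)
    (hF : ∀ y, ContinuousWithinAt (fun τ => F τ y) s t) (ht : t ∈ s) :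
    ContinuousWithinAt ξ s t := by
  refine tendsto_order.2 ⟨fun l hl => ?_, fun u hu => ?_⟩
  · have hFl : F t l < a := hroot t ht ▸ hmono t ht hl
    filter_upwards [(hF l).eventually_lt_const hFl, self_mem_nhdsWithin] with τ hτ hτs
    exact (hmono τ hτs).lt_iff_lt.mp (hroot τ hτs ▸ hτ)
  · have hFu : a < F t u := hroot t ht ▸ hmono t ht hu
    filter_upwards [(hF u).eventually_const_lt hFu, self_mem_nhdsWithin] with τ hτ hτs
    exact (hmono τ hτs).lt_iff_lt.mp (hroot τ hτs ▸ hτ)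

theorem kyle_value_function_solves_hjb_general
    (H Ht Hy Hyy : ℝ → ℝ → ℝ) (a : ℝ)
    (hHt : ∀ t ∈ Ico (0:ℝ) 1, ∀ y : ℝ,
      HasDerivWithinAt (fun τ => H τ y) (Ht t y) (Ico (0:ℝ) 1) t)
    (hHy : ∀ t ∈ Ico (0:ℝ) 1, ∀ y : ℝ, HasDerivAt (fun u => H t u) (Hy t y) y)
    (hHyy : ∀ t ∈ Ico (0:ℝ) 1, ∀ y : ℝ, HasDerivAt (fun u => Hy t u) (Hyy t y) y)
    (hHcont : ContinuousOn (fun p : ℝ × ℝ => H p.1 p.2) (Ico (0:ℝ) 1 ×ˢ univ))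
    (hHtcont : ContinuousOn (fun p : ℝ × ℝ => Ht p.1 p.2) (Ico (0:ℝ) 1 ×ˢ univ))
    (hHycont : ContinuousOn (fun p : ℝ × ℝ => Hy p.1 p.2) (Ico (0:ℝ) 1 ×ˢ univ))
    (hheat : ∀ t ∈ Ico (0:ℝ) 1, ∀ y : ℝ, Ht t y + (1 / 2) * Hyy t y = 0)
    (hmono : ∀ t ∈ Ico (0:ℝ) 1, StrictMono (H t))
    (ξ : ℝ → ℝ) (hξ : ∀ t ∈ Ico (0:ℝ) 1, H t (ξ t) = a)
    (hint : ∀ t ∈ Ico (0:ℝ) 1, IntervalIntegrable (fun s => Hy s (ξ s)) volume t 1)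
    (Ψ : ℝ → ℝ → ℝ)
    (hΨ : ∀ t ∈ Ico (0:ℝ) 1, ∀ x : ℝ,
      Ψ t x = (∫ u in ξ t..x, (H t u - a)) + (1 / 2) * ∫ s in t..(1:ℝ), Hy s (ξ s)) :
    ∀ t ∈ Ico (0:ℝ) 1, ∀ x : ℝ,
      HasDerivAt (fun u => Ψ t u) (H t x - a) x ∧
      HasDerivAt (fun u => H t u - a) (Hy t x) x ∧
      ∃ d : ℝ, HasDerivWithinAt (fun τ => Ψ τ x) d (Ico (0:ℝ) 1) t ∧
        d + (1 / 2) * Hy t x = 0 := by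
  intro t ht x
  have hHslice : ∀ τ ∈ Ico (0:ℝ) 1, Continuous fun u => H τ u - a := fun τ hτ =>
    (continuousOn_univ.mp (hHcont.uncurry_left τ hτ)).sub continuous_const
  refine ⟨?_, (hHy t ht x).sub_const a, ?_⟩
  · have hc := hHslice t ht
    exact ((intervalIntegral.integral_hasDerivAt_right (hc.intervalIntegrable _ _)
      (hc.stronglyMeasurableAtFilter _ _) hc.continuousAt).add_const _).congr_of_eventuallyEq
      (Eventually.of_forall (hΨ t ht))
  have hξc : ContinuousOn ξ (Ico 0 1) := fun τ hτ =>
    continuousWithinAt_root_of_strictMono hmono hξ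
      (fun y => hHcont.uncurry_right y (mem_univ y) τ hτ) hτ
  have hg : ContinuousOn (fun s => Hy s (ξ s)) (Ico 0 1) :=
    hHycont.comp (continuousOn_id.prodMk hξc) fun s hs => ⟨hs, trivial⟩
  have hP := hasDerivWithinAt_parametric_intervalIntegral_Ico (F := fun τ u => H τ u - a)
    (c := ξ t) (d := x) (fun τ hτ u => (hHt τ hτ u).sub_const a) (hHcont.sub continuousOn_const) hHtcont ht
  have hE := hasDerivWithinAt_integral_to_root (F := fun τ u => H τ u - a)
    (fun τ hτ _ _ h => sub_le_sub_right ((hmono τ hτ).monotone h) a)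
    (fun τ hτ => sub_eq_zero.mpr (hξ τ hτ)) (hξc t ht) ((hHt t ht (ξ t)).sub_const a) ht
  have hI := hasDerivWithinAt_primitive_Ico hg ht
  have hPt : ∫ u in ξ t..x, Ht t u = -(1 / 2) * (Hy t x - Hy t (ξ t)) := by
    rw [intervalIntegral.integral_eq_sub_of_hasDerivAt (f := fun u => -(1 / 2) * Hy t u)
      (fun u _ =>
        ((hHyy t ht u).const_mul (-(1 / 2))).congr_deriv (by linarith [hheat t ht u]))
      ((continuousOn_univ.mp (hHtcont.uncurry_left t ht)).intervalIntegrable _ _)]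
    ring
  have hsplit : ∀ τ ∈ Ico (0:ℝ) 1, Ψ τ x = (∫ u in ξ t..x, (H τ u - a))
      - (∫ u in ξ t..ξ τ, (H τ u - a))
      + (1 / 2) * ((∫ s in t..1, Hy s (ξ s)) - ∫ s in t..τ, Hy s (ξ s)) := by
    intro τ hτ
    rw [hΨ τ hτ x, intervalIntegral.integral_interval_sub_left
      ((hHslice τ hτ).intervalIntegrable _ _) ((hHslice τ hτ).intervalIntegrable _ _),
      intervalIntegral.integral_interval_sub_left (hint t ht)
      ((hg.mono (ordConnected_Ico.uIcc_subset ht hτ)).intervalIntegrable)]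
  refine ⟨_, ((hP.sub hE).add ((hI.const_sub _).const_mul (1 / 2))).congr hsplit (hsplit t ht), ?_⟩
  rw [hPt]
  ring

/-- **The auxiliary value function `Ψᵃ` of the insider solves the backward heat
equation.**  Let `H ∈ C^{1,2}([0,1) × ℝ)` (with time derivative `Ht`, space derivatives
`Hy`, `Hyy`, all continuous on `[0,1) × ℝ`) satisfy `H_t + ½ H_{yy} = 0`, let each
`H(t,·)` be strictly increasing with range `ℝ`, let `ξ(t)` be the unique solution of
`H(t, ξ(t)) = a`, and assume `s ↦ H_y(s, ξ(s))` is interval integrable on `[t,1]` for each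
`t ∈ [0,1)`.  Define `Ψᵃ(t,x) = ∫_{ξ(t)}^x (H(t,u) − a) du + ½ ∫_t^1 H_y(s, ξ(s)) ds`.
Then on `[0,1) × ℝ`:  (i) `Ψᵃ_x = H − a`;  (ii) `Ψᵃ_{xx} = H_y`;  and
(iii) `Ψᵃ_t + ½ Ψᵃ_{xx} = 0`. -/
theorem kyle_value_function_solves_hjb
    (H Ht Hy Hyy : ℝ → ℝ → ℝ) (a : ℝ)
    (hHt : ∀ t ∈ Ico (0:ℝ) 1, ∀ y : ℝ,
      HasDerivWithinAt (fun τ => H τ y) (Ht t y) (Ico (0:ℝ) 1) t)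
    (hHy : ∀ t ∈ Ico (0:ℝ) 1, ∀ y : ℝ, HasDerivAt (fun u => H t u) (Hy t y) y)
    (hHyy : ∀ t ∈ Ico (0:ℝ) 1, ∀ y : ℝ, HasDerivAt (fun u => Hy t u) (Hyy t y) y)
    (hHcont : ContinuousOn (fun p : ℝ × ℝ => H p.1 p.2) (Ico (0:ℝ) 1 ×ˢ univ))
    (hHtcont : ContinuousOn (fun p : ℝ × ℝ => Ht p.1 p.2) (Ico (0:ℝ) 1 ×ˢ univ))
    (hHycont : ContinuousOn (fun p : ℝ × ℝ => Hy p.1 p.2) (Ico (0:ℝ) 1 ×ˢ univ))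
    (hHyycont : ContinuousOn (fun p : ℝ × ℝ => Hyy p.1 p.2) (Ico (0:ℝ) 1 ×ˢ univ))
    (hheat : ∀ t ∈ Ico (0:ℝ) 1, ∀ y : ℝ, Ht t y + (1 / 2) * Hyy t y = 0)
    (hmono : ∀ t ∈ Ico (0:ℝ) 1, StrictMono (H t))
    (hsurj : ∀ t ∈ Ico (0:ℝ) 1, Function.Surjective (H t))
    (ξ : ℝ → ℝ) (hξ : ∀ t ∈ Ico (0:ℝ) 1, H t (ξ t) = a)
    (hint : ∀ t ∈ Ico (0:ℝ) 1, IntervalIntegrable (fun s => Hy s (ξ s)) volume t 1)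
    (Ψ : ℝ → ℝ → ℝ)
    (hΨ : ∀ t ∈ Ico (0:ℝ) 1, ∀ x : ℝ,
      Ψ t x = (∫ u in ξ t..x, (H t u - a)) + (1 / 2) * ∫ s in t..(1:ℝ), Hy s (ξ s)) :
    ∀ t ∈ Ico (0:ℝ) 1, ∀ x : ℝ,
      HasDerivAt (fun u => Ψ t u) (H t x - a) x ∧
      HasDerivAt (fun u => H t u - a) (Hy t x) x ∧
      ∃ d : ℝ, HasDerivWithinAt (fun τ => Ψ τ x) d (Ico (0:ℝ) 1) t ∧
        d + (1 / 2) * Hy t x = 0 :=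
  kyle_value_function_solves_hjb_general H Ht Hy Hyy a hHt hHy hHyy hHcont hHtcont hHycont hheat
    hmono ξ hξ hint Ψ hΨ
end
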